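/- Fix n ≥ 1 and let Θ : Γ(E) → Γ(E_*) be a contractive multi-analytic operator, with defect operator Δ_Θ := (I − Θ*Θ)^{1/2}. Then for every j = 1, …, n and f, g ∈ Γ(E): (a) ‖Δ_Θ (L_j^E f)‖ = ‖Δ_Θ f‖, and (b) ⟨Δ_Θ (L_i^E f), Δ_Θ (L_j^E g)⟩ = 0 whenever i ≠ j. Consequently, for each j there is a unique bounded operator C_j on the closure of the range of Δ_Θ satisfying C_j (Δ_Θ f) = Δ_Θ (L_j^E f) for all f ∈ Γ(E), each C_j is an isometry, and C_i* C_j = δ_{ij} I on cl ran Δ_Θ (i.e. C = [C_1, …, C_n] is a row isometry). -/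

import Mathlib

/-!
Because `Θ` is a contraction, `⟪Δ_Θ x, Δ_Θ y⟫ = ⟪x, y⟫ - ⟪Θ x, Θ y⟫`. The creation operators
satisfy `L_i* L_j = δ_ij I` and `Θ` intertwines them, so both terms on the right transform in the
same way under `f ↦ L_i f`, `g ↦ L_j g`; this gives (a) and (b). By (a), `Δ_Θ f ↦ Δ_Θ (L_j f)` is
a well-defined isometry on `ran Δ_Θ`, hence extends uniquely to its closure, and the relations
`C_i* C_j = δ_ij I` pass from the dense subspace `ran Δ_Θ` to its closure by continuity.
-/

set_option linter.unusedSectionVars false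

noncomputable section
open ContinuousLinearMap
open scoped ENNReal NNReal ComplexInnerProductSpace
section Defect
variable {H K : Type*} [NormedAddCommGroup H] [InnerProductSpace ℂ H] [CompleteSpace H]
  [NormedAddCommGroup K] [InnerProductSpace ℂ K] [CompleteSpace K]

/-- The defect operator `Δ_A := (I - A*A)^{1/2}` of a contraction `A : H → K`. -/
noncomputable def defect (A : H →L[ℂ] K) : H →L[ℂ] H :=
  CFC.sqrt (1 - (ContinuousLinearMap.adjoint A).comp A)

/-- Closure of the range of an operator, as a submodule. -/
noncomputable def clRan (A : H →L[ℂ] K) : Submodule ℂ K :=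
  (LinearMap.range (A : H →ₗ[ℂ] K)).topologicalClosure

theorem defect_mem_clRan (A : H →L[ℂ] K) (x : H) : defect A x ∈ clRan (defect A) :=
  Submodule.le_topologicalClosure _ (LinearMap.mem_range_self (defect A : H →ₗ[ℂ] H) x)

instance clRan_completeSpace (A : H →L[ℂ] K) : CompleteSpace (clRan A) :=
  (Submodule.isClosed_topologicalClosure _).isComplete.completeSpace_coe
end Defect

section FockDef
/-- Words in the generators `{1, …, n}`: the free monoid on `Fin n`. -/
abbrev Word (n : ℕ) := List (Fin n)

/-- The full Fock space over `ℂⁿ` with coefficients in `E`, realized as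
`ℓ²(F_n^+, E)`, the Hilbert space of square-summable `E`-valued families indexed by words. -/
abbrev Fock (n : ℕ) (E : Type*) [NormedAddCommGroup E] [InnerProductSpace ℂ E] : Type _ :=
  lp (fun _ : Word n => E) 2

variable {n : ℕ} {E : Type*} [NormedAddCommGroup E] [InnerProductSpace ℂ E]

/-- The underlying function of `L_i f`: `(L_i f)(α) = f(β)` if `α = iβ`, else `0`. -/
def shiftFun (i : Fin n) (f : Word n → E) : Word n → E
  | [] => 0
  | a :: β => if a = i then f β else 0

theorem shiftFun_cons (i : Fin n) (f : Word n → E) (β : Word n) :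
    shiftFun i f (i :: β) = f β := by simp [shiftFun]

theorem shiftFun_eq_zero {i : Fin n} {f : Word n → E} {α : Word n}
    (hα : α ∉ Set.range (fun β : Word n => (i :: β : Word n))) : shiftFun i f α = 0 := by
  match α with
  | [] => rfl
  | a :: β =>
    have : ¬ (a = i) := by rintro rfl; exact hα ⟨β, rfl⟩
    simp [shiftFun, this]

theorem cons_injective (i : Fin n) :
    Function.Injective (fun β : Word n => (i :: β : Word n)) := fun a b h => by
  simpa using h

theorem shiftFun_memℓp (i : Fin n) (f : Fock n E) : Memℓp (shiftFun i ⇑f) 2 := by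
  refine memℓp_gen ?_
  have h0 : ∀ α ∉ Set.range (fun β : Word n => (i :: β : Word n)),
      ‖shiftFun i (⇑f) α‖ ^ (2 : ℝ≥0∞).toReal = 0 := by
    intro α hα
    rw [shiftFun_eq_zero hα]
    simp [Real.zero_rpow]
  refine ((cons_injective i).summable_iff h0).mp ?_
  have h1 : (fun α => ‖shiftFun i (⇑f) α‖ ^ (2 : ℝ≥0∞).toReal) ∘
      (fun β : Word n => (i :: β : Word n)) = fun β => ‖f β‖ ^ (2 : ℝ≥0∞).toReal := by
    funext β
    simp [Function.comp, shiftFun_cons]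
  rw [h1]
  exact (lp.memℓp f).summable (by norm_num)

theorem shiftFun_norm (i : Fin n) (f : Fock n E) :
    ‖(⟨shiftFun i ⇑f, shiftFun_memℓp i f⟩ : Fock n E)‖ = ‖f‖ := by
  have hp : 0 < (2 : ℝ≥0∞).toReal := by norm_num
  refine Real.rpow_left_injOn (by norm_num : (2 : ℝ≥0∞).toReal ≠ 0)
    (norm_nonneg _) (norm_nonneg _) ?_
  simp only []
  rw [lp.norm_rpow_eq_tsum hp, lp.norm_rpow_eq_tsum hp]
  have h0 : (Function.support fun α => ‖shiftFun i (⇑f) α‖ ^ (2 : ℝ≥0∞).toReal) ⊆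
      Set.range (fun β : Word n => (i :: β : Word n)) := by
    intro α hα
    simp only [Function.mem_support] at hα
    by_contra hr
    exact hα (by rw [shiftFun_eq_zero hr]; simp [Real.zero_rpow])
  rw [← (cons_injective i).tsum_eq h0]
  congr 1
  funext β
  simp [shiftFun_cons]

/-- The left creation operator `L_i` on the Fock space, as a linear map. -/
noncomputable def creationL (i : Fin n) : Fock n E →ₗ[ℂ] Fock n E where
  toFun f := ⟨shiftFun i ⇑f, shiftFun_memℓp i f⟩
  map_add' f g := by
    apply lp.ext
    funext α
    match α with
    | [] => simp [shiftFun, lp.coeFn_add]; erw [Pi.add_apply]; simp [shiftFun]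
    | a :: β =>
      by_cases h : a = i <;> simp [shiftFun, h, lp.coeFn_add] <;> erw [Pi.add_apply] <;> simp [shiftFun, h]
  map_smul' c f := by
    apply lp.ext
    funext α
    match α with
    | [] => simp [shiftFun, lp.coeFn_smul]
    | a :: β =>
      by_cases h : a = i <;> simp [shiftFun, h, lp.coeFn_smul]

/-- The left creation operator `L_i = L_i^E ∈ B(Γ(E))`, defined by
`(L_i f)(α) = f(β)` if `α = iβ` for some word `β`, and `(L_i f)(α) = 0` otherwise. -/
noncomputable def creation (i : Fin n) : Fock n E →L[ℂ] Fock n E :=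
  (creationL i).mkContinuous 1 (fun f => by
    rw [one_mul]
    exact le_of_eq (shiftFun_norm i f))


/-- The `E`-valued family supported at the empty word with value `v`. -/
def constFun (n : ℕ) (v : E) : Word n → E := fun α => if α = [] then v else 0

theorem constFun_memℓp (v : E) : Memℓp (constFun n v) 2 := by
  refine (memℓp_zero ?_).of_exponent_ge (zero_le : (0 : ℝ≥0∞) ≤ 2)
  refine (Set.finite_singleton ([] : Word n)).subset ?_
  intro α hα
  simp only [Set.mem_setOf_eq, constFun] at hα
  by_contra h
  simp only [Set.mem_singleton_iff] at h
  exact hα (if_neg h)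

/-- The canonical embedding of `E` into `Γ(E)` (families supported at the empty word). -/
def fockConst (n : ℕ) (v : E) : Fock n E := ⟨constFun n v, constFun_memℓp v⟩

theorem fockConst_norm_le (f : Fock n E) :
    ‖(⟨constFun n (f []), constFun_memℓp _⟩ : Fock n E)‖ ≤ ‖f‖ := by
  have hp : 0 < (2 : ℝ≥0∞).toReal := by norm_num
  rw [← Real.rpow_le_rpow_iff (norm_nonneg _) (norm_nonneg _) hp]
  rw [lp.norm_rpow_eq_tsum hp]
  have h1 : (∑' α : Word n, ‖constFun n (f []) α‖ ^ (2 : ℝ≥0∞).toReal) =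
      ‖f []‖ ^ (2 : ℝ≥0∞).toReal := by
    refine tsum_eq_single ([] : Word n) ?_
    intro b' hb'
    simp [constFun, if_neg hb', Real.zero_rpow hp.ne']
  rw [h1]
  exact Real.rpow_le_rpow (norm_nonneg _) (lp.norm_apply_le_norm two_ne_zero f []) hp.le

/-- `P_∅`, the orthogonal projection of `Γ(E)` onto the subspace of families supported
at the empty word, as a linear map. -/
noncomputable def projEmptyL : Fock n E →ₗ[ℂ] Fock n E where
  toFun f := ⟨constFun n (f []), constFun_memℓp _⟩
  map_add' f g := by
    apply lp.ext; funext α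
    by_cases h : α = [] <;> simp [constFun, h, lp.coeFn_add] <;> erw [Pi.add_apply] <;> simp [constFun, h]
  map_smul' c f := by
    apply lp.ext; funext α
    by_cases h : α = [] <;> simp [constFun, h, lp.coeFn_smul]

/-- `P_∅ = P_∅^E`, the orthogonal projection of `Γ(E)` onto the subspace of families
supported at the empty word (identified with `E`). -/
noncomputable def projEmpty : Fock n E →L[ℂ] Fock n E :=
  projEmptyL.mkContinuous 1 (fun f => by rw [one_mul]; exact fockConst_norm_le f)

end FockDef

section Creation

variable {n : ℕ} {E : Type*} [NormedAddCommGroup E] [InnerProductSpace ℂ E]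

theorem creation_apply (i : Fin n) (f : Fock n E) (α : Word n) :
    creation i f α = shiftFun i f α := rfl

theorem inner_creation_self (i : Fin n) (f g : Fock n E) :
    ⟪creation i f, creation i g⟫ = ⟪f, g⟫ :=
  (LinearMap.norm_map_iff_inner_map_map (creation (E := E) i).toLinearMap).mp
    (shiftFun_norm i) f g

theorem inner_creation_of_ne {i j : Fin n} (hij : i ≠ j) (f g : Fock n E) :
    ⟪creation i f, creation j g⟫ = 0 := by
  rw [lp.inner_eq_tsum]
  convert tsum_zero with α
  -- `L_i f` is supported on words starting with `i`, and `L_j g` on words starting with `j`.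
  rcases α with _ | ⟨a, β⟩
  · simp [creation_apply, shiftFun]
  · by_cases hai : a = i
    · simp [creation_apply, shiftFun, hai, hij]
    · simp [creation_apply, shiftFun, hai]

theorem inner_creation (i j : Fin n) (f g : Fock n E) :
    ⟪creation i f, creation j g⟫ = if i = j then ⟪f, g⟫ else 0 := by
  split_ifs with hij
  · subst hij
    exact inner_creation_self i f g
  · exact inner_creation_of_ne hij f g

end Creation

section Defect

variable {H K : Type*} [NormedAddCommGroup H] [InnerProductSpace ℂ H] [CompleteSpace H]
  [NormedAddCommGroup K] [InnerProductSpace ℂ K] [CompleteSpace K]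

theorem one_sub_adjoint_comp_self_nonneg {A : H →L[ℂ] K} (hA : ‖A‖ ≤ 1) :
    0 ≤ 1 - adjoint A ∘L A := by
  have hpos : 0 ≤ adjoint A ∘L A := (nonneg_iff_isPositive _).mpr (isPositive_adjoint_comp_self A)
  rw [sub_nonneg, ← CStarAlgebra.norm_le_one_iff_of_nonneg _ hpos, norm_adjoint_comp_self]
  exact mul_le_one₀ hA (norm_nonneg A) hA

theorem inner_defect_defect {A : H →L[ℂ] K} (hA : ‖A‖ ≤ 1) (x y : H) :
    ⟪defect A x, defect A y⟫ = ⟪x, y⟫ - ⟪A x, A y⟫ := by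
  have hsa : IsSelfAdjoint (defect A) := .of_nonneg (CFC.sqrt_nonneg _)
  have hsq : defect A ∘L defect A = 1 - adjoint A ∘L A :=
    CFC.sqrt_mul_sqrt_self _ (one_sub_adjoint_comp_self_nonneg hA)
  rw [← adjoint_inner_right, hsa.adjoint_eq, ← comp_apply, hsq]
  simp [inner_sub_right, adjoint_inner_right]

theorem mem_clRan (A : H →L[ℂ] K) (x : H) : A x ∈ clRan A :=
  Submodule.le_topologicalClosure _ (LinearMap.mem_range_self (A : H →ₗ[ℂ] K) x)

def toClRan (A : H →L[ℂ] K) : H →L[ℂ] clRan A :=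
  A.codRestrict (clRan A) (mem_clRan A)

@[simp]
theorem coe_toClRan_apply (A : H →L[ℂ] K) (x : H) : (toClRan A x : K) = A x := rfl

theorem denseRange_toClRan (A : H →L[ℂ] K) : DenseRange (toClRan A) := by
  intro y
  rw [Topology.IsInducing.subtypeVal.closure_eq_preimage_closure_image, ← Set.range_comp]
  exact y.2

theorem existsUnique_comp_toClRan_eq {F : Type*} [NormedAddCommGroup F] [NormedSpace ℂ F]
    [CompleteSpace F] (A : H →L[ℂ] K) (U : H →L[ℂ] F) (c : ℝ) (hU : ∀ x, ‖U x‖ ≤ c * ‖A x‖) :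
    ∃! B : clRan A →L[ℂ] F, ∀ x, B (toClRan A x) = U x := by
  have hdense : DenseRange (toClRan A : H →ₗ[ℂ] clRan A) := denseRange_toClRan A
  have hbound : ∀ x, ‖U x‖ ≤ c * ‖toClRan A x‖ := hU
  refine ⟨(U : H →ₗ[ℂ] F).extendOfNorm (toClRan A : H →ₗ[ℂ] clRan A),
    LinearMap.extendOfNorm_eq hdense ⟨c, hbound⟩, fun B hB => ?_⟩
  exact (LinearMap.extendOfNorm_unique hdense c hbound B (LinearMap.ext hB)).symm

end Defect

open scoped InnerProductSpace in
theorem adjoint_comp_eq_of_denseRange {𝕜 X M N : Type*} [RCLike 𝕜]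
    [NormedAddCommGroup M] [InnerProductSpace 𝕜 M] [CompleteSpace M]
    [NormedAddCommGroup N] [InnerProductSpace 𝕜 N] [CompleteSpace N]
    {D : X → M} (hD : DenseRange D) {A B : M →L[𝕜] N} {S : M →L[𝕜] M}
    (h : ∀ x y, ⟪A (D x), B (D y)⟫_𝕜 = ⟪D x, S (D y)⟫_𝕜) : adjoint A ∘L B = S := by
  have hinner : ∀ u v, ⟪A u, B v⟫_𝕜 = ⟪u, S v⟫_𝕜 :=
    hD.induction_on₂ (isClosed_eq (by fun_prop) (by fun_prop)) h
  ext v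
  refine ext_inner_left 𝕜 fun u => ?_
  rw [comp_apply, adjoint_inner_right, hinner]

section MultiAnalytic

variable {n : ℕ} {E Estar : Type*}
  [NormedAddCommGroup E] [InnerProductSpace ℂ E]
  [NormedAddCommGroup Estar] [InnerProductSpace ℂ Estar]

def IsMultiAnalytic (Θ : Fock n E →L[ℂ] Fock n Estar) : Prop :=
  ∀ i : Fin n, Θ.comp (creation i) = (creation i).comp Θ

theorem IsMultiAnalytic.apply_creation {Θ : Fock n E →L[ℂ] Fock n Estar}
    (hΘ : IsMultiAnalytic Θ) (i : Fin n) (f : Fock n E) :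
    Θ (creation i f) = creation i (Θ f) :=
  DFunLike.congr_fun (hΘ i) f

variable [CompleteSpace E] [CompleteSpace Estar] {Θ : Fock n E →L[ℂ] Fock n Estar}

theorem inner_defect_creation (hΘc : ‖Θ‖ ≤ 1) (hΘ : IsMultiAnalytic Θ) (i j : Fin n)
    (f g : Fock n E) :
    ⟪defect Θ (creation i f), defect Θ (creation j g)⟫ =
      if i = j then ⟪defect Θ f, defect Θ g⟫ else 0 := by
  rw [inner_defect_defect hΘc, inner_defect_defect hΘc, hΘ.apply_creation, hΘ.apply_creation,
    inner_creation, inner_creation]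
  split_ifs <;> simp

theorem norm_defect_creation (hΘc : ‖Θ‖ ≤ 1) (hΘ : IsMultiAnalytic Θ) (j : Fin n)
    (f : Fock n E) : ‖defect Θ (creation j f)‖ = ‖defect Θ f‖ := by
  have h := congrArg RCLike.re (inner_defect_creation hΘc hΘ j j f f)
  rw [if_pos rfl, inner_self_eq_norm_sq, inner_self_eq_norm_sq] at h
  exact (sq_eq_sq₀ (norm_nonneg _) (norm_nonneg _)).mp h

end MultiAnalytic

theorem rowIsometry_of_contractive_multiAnalytic_general {n : ℕ} {E Estar : Type*}
    [NormedAddCommGroup E] [InnerProductSpace ℂ E] [CompleteSpace E]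
    [NormedAddCommGroup Estar] [InnerProductSpace ℂ Estar] [CompleteSpace Estar]
    (Θ : Fock n E →L[ℂ] Fock n Estar) (hΘc : ‖Θ‖ ≤ 1)
    (hΘ : ∀ i : Fin n, Θ.comp (creation i) = (creation i).comp Θ) :
    (∀ (j : Fin n) (f : Fock n E), ‖defect Θ (creation j f)‖ = ‖defect Θ f‖) ∧
    (∀ (i j : Fin n) (f g : Fock n E), i ≠ j →
      ⟪defect Θ (creation i f), defect Θ (creation j g)⟫ = 0) ∧
    (∀ j : Fin n, ∃! C : clRan (defect Θ) →L[ℂ] clRan (defect Θ),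
      ∀ f : Fock n E, C ⟨defect Θ f, defect_mem_clRan _ _⟩ =
        ⟨defect Θ (creation j f), defect_mem_clRan _ _⟩) ∧
    (∀ C : Fin n → (clRan (defect Θ) →L[ℂ] clRan (defect Θ)),
      (∀ (j : Fin n) (f : Fock n E), C j ⟨defect Θ f, defect_mem_clRan _ _⟩ =
        ⟨defect Θ (creation j f), defect_mem_clRan _ _⟩) →
      (∀ j : Fin n, Isometry (C j)) ∧
      (∀ i j : Fin n, (ContinuousLinearMap.adjoint (C i)).comp (C j) =
        if i = j then 1 else 0)) := by
  have hinner := inner_defect_creation hΘc hΘ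
  have hnorm := norm_defect_creation hΘc hΘ
  refine ⟨hnorm, fun i j f g hij => by rw [hinner, if_neg hij], fun j => ?_, fun C hC => ?_⟩
  · exact existsUnique_comp_toClRan_eq _ (toClRan (defect Θ) ∘L creation j) 1 fun f =>
      (hnorm j f).trans_le (one_mul _).ge
  · have hC' : ∀ j f, C j (toClRan (defect Θ) f) = toClRan (defect Θ) (creation j f) := hC
    have hadj : ∀ i j, adjoint (C i) ∘L C j = if i = j then 1 else 0 := fun i j =>
      adjoint_comp_eq_of_denseRange (denseRange_toClRan _) fun f g => by
        rw [hC', hC']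
        split_ifs with hij <;> simp [Submodule.coe_inner, hinner, hij]
    exact ⟨fun j => (C j).isometry_iff_adjoint_comp_self.mpr (by simpa using hadj j j), hadj⟩

/-- For a contractive multi-analytic `Θ : Γ(E) → Γ(E_*)` with defect
`Δ_Θ = (I − Θ*Θ)^{1/2}`: (a) `‖Δ_Θ(L_j f)‖ = ‖Δ_Θ f‖`; (b) `⟪Δ_Θ(L_i f), Δ_Θ(L_j g)⟫ = 0`
for `i ≠ j`; consequently for each `j` there is a unique bounded operator `C_j` on
`cl ran Δ_Θ` with `C_j(Δ_Θ f) = Δ_Θ(L_j f)`, each `C_j` is an isometry, and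
`C_i* C_j = δ_{ij} I` (a row isometry). -/
theorem rowIsometry_of_contractive_multiAnalytic {n : ℕ} (hn : 1 ≤ n) {E Estar : Type*}
    [NormedAddCommGroup E] [InnerProductSpace ℂ E] [CompleteSpace E]
    [NormedAddCommGroup Estar] [InnerProductSpace ℂ Estar] [CompleteSpace Estar]
    (Θ : Fock n E →L[ℂ] Fock n Estar) (hΘc : ‖Θ‖ ≤ 1)
    (hΘ : ∀ i : Fin n, Θ.comp (creation i) = (creation i).comp Θ) :
    (∀ (j : Fin n) (f : Fock n E), ‖defect Θ (creation j f)‖ = ‖defect Θ f‖) ∧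
    (∀ (i j : Fin n) (f g : Fock n E), i ≠ j →
      ⟪defect Θ (creation i f), defect Θ (creation j g)⟫ = 0) ∧
    (∀ j : Fin n, ∃! C : clRan (defect Θ) →L[ℂ] clRan (defect Θ),
      ∀ f : Fock n E, C ⟨defect Θ f, defect_mem_clRan _ _⟩ =
        ⟨defect Θ (creation j f), defect_mem_clRan _ _⟩) ∧
    (∀ C : Fin n → (clRan (defect Θ) →L[ℂ] clRan (defect Θ)),
      (∀ (j : Fin n) (f : Fock n E), C j ⟨defect Θ f, defect_mem_clRan _ _⟩ =
        ⟨defect Θ (creation j f), defect_mem_clRan _ _⟩) →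
      (∀ j : Fin n, Isometry (C j)) ∧
      (∀ i j : Fin n, (ContinuousLinearMap.adjoint (C i)).comp (C j) =
        if i = j then 1 else 0)) :=
  rowIsometry_of_contractive_multiAnalytic_general Θ hΘc hΘ
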